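/- arXiv:1603.04712 — 2 statements merged into one kernel-verified Lean document; each statement's English description precedes it below -/
import Mathlib

section
/- Let K be a differential field with derivation ∂ and constants C, and let x ∈ K satisfy ∂ x = 1 (so x is non-constant). Let μ₁, …, μ_k ∈ C be pairwise distinct, and y₁, …, y_k ∈ K nonzero elements with ∂ y_i = μ_i · y_i. Then the family {x^j · y_i : 1 ≤ i ≤ k, 0 ≤ j < n_i} is linearly independent over C, for any multiplicities n_i ≥ 1. -/
/-!
View `∂` as a linear endomorphism of `K` over its field of constants `C`. Since
`(∂ - μ) (p(x) y) = p'(x) y` whenever `∂ y = μ y` and `p ∈ C[X]`, each `p(x) yᵢ` lies in the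
generalized eigenspace of `∂` for `μᵢ`. Generalized eigenspaces for distinct eigenvalues are
independent, so a vanishing sum `∑ pᵢ(x) yᵢ` forces every `pᵢ(x) = 0`. Finally `x` is
transcendental over `C`: applying `∂` to the minimal polynomial relation of `x` gives the nonzero
relation `(minpoly)'(x) = 0` of smaller degree.
-/

open Polynomial Module

namespace Derivation

def ofAddMul {A : Type*} [CommRing A] (del : A → A) (hadd : ∀ a b, del (a + b) = del a + del b)
    (hmul : ∀ a b, del (a * b) = a * del b + b * del a) : Derivation ℤ A A :=
  Derivation.mk' (AddMonoidHom.mk' del hadd).toIntLinearMap hmul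

section Constants

variable {K : Type*} [Field K] (D : Derivation ℤ K K)

def constants : Subfield K where
  carrier := {a | D a = 0}
  zero_mem' := D.map_zero
  one_mem' := D.map_one_eq_zero
  add_mem' {a b} ha hb := by simp_all
  neg_mem' {a} ha := by simp_all
  mul_mem' {a b} ha hb := by simp_all [leibniz]
  inv_mem' a ha := by simp_all [leibniz_inv]

def overConstants : Derivation D.constants K K :=
  Derivation.mk'
    { toFun := D
      map_add' := D.map_add
      map_smul' := fun c a => by
        simp [Subfield.smul_def, leibniz, show D c = 0 from c.2] }
    D.leibniz

end Constants

variable {R K : Type*} [Field R] [CommRing K] [Algebra R K] (D : Derivation R K K) {x : K}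

theorem transcendental_of_apply_eq_one [IsDomain K] [CharZero R] (hx : D x = 1) :
    Transcendental R x := by
  intro halg
  have hint := halg.isIntegral
  have hroot : aeval x (derivative (minpoly R x)) = 0 := by
    simpa [hx] using (D.map_aeval (minpoly R x) x).symm
  have hne : derivative (minpoly R x) ≠ 0 :=
    derivative_ne_zero.mpr (minpoly.natDegree_pos hint).ne'
  exact (minpoly.degree_le_of_ne_zero R x hne hroot).not_gt
    (degree_derivative_lt (minpoly.ne_zero hint))

theorem sub_smul_one_apply_aeval_mul {μ : R} {y : K} (hx : D x = 1) (hy : D y = μ • y)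
    (p : R[X]) :
    ((D : K →ₗ[R] K) - μ • 1) (aeval x p * y) = aeval x (derivative p) * y := by
  simp only [LinearMap.sub_apply, coeFn_coe, leibniz, hy, map_aeval, hx, algebraMap_end_apply,
    smul_eq_mul, mul_one, Algebra.smul_def]
  ring

theorem pow_sub_smul_one_apply_aeval_mul {μ : R} {y : K} (hx : D x = 1) (hy : D y = μ • y)
    (m : ℕ) (p : R[X]) :
    (((D : K →ₗ[R] K) - μ • 1) ^ m) (aeval x p * y) = aeval x (derivative^[m] p) * y := by
  induction m generalizing p with
  | zero => rfl
  | succ m ih =>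
    rw [pow_succ, End.mul_apply, sub_smul_one_apply_aeval_mul D hx hy, ih,
      Function.iterate_succ_apply]

theorem aeval_mul_mem_maxGenEigenspace {μ : R} {y : K} (hx : D x = 1) (hy : D y = μ • y)
    (p : R[X]) : aeval x p * y ∈ End.maxGenEigenspace (D : K →ₗ[R] K) μ :=
  (End.mem_maxGenEigenspace _ _ _).mpr ⟨p.natDegree + 1, by
    rw [pow_sub_smul_one_apply_aeval_mul D hx hy,
      iterate_derivative_eq_zero p.natDegree.lt_succ_self, map_zero, zero_mul]⟩

theorem eq_zero_of_sum_aeval_mul_eq_zero [IsDomain K] [CharZero R] {ι : Type*} {μ : ι → R}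
    (hμ : Function.Injective μ) {y : ι → K} (hy0 : ∀ i, y i ≠ 0) (hy : ∀ i, D (y i) = μ i • y i)
    (hx : D x = 1) {s : Finset ι} {p : ι → R[X]} (h : ∑ i ∈ s, aeval x (p i) * y i = 0) :
    ∀ i ∈ s, p i = 0 := by
  intro i hi
  have hterm : aeval x (p i) * y i = 0 :=
    (iSupIndep_iff_finsetSum_eq_zero_imp_eq_zero _).mp
      ((End.independent_maxGenEigenspace (D : K →ₗ[R] K)).comp hμ) s _
      (fun j _ => aeval_mul_mem_maxGenEigenspace D hx (hy j) (p j)) h i hi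
  exact transcendental_iff.mp (D.transcendental_of_apply_eq_one hx) _
    ((mul_eq_zero.mp hterm).resolve_right (hy0 i))

end Derivation

theorem canonical_solutions_linearIndependent_general (K : Type*) [Field K] [CharZero K]
    (del : K → K)
    (hadd : ∀ a b : K, del (a + b) = del a + del b)
    (hmul : ∀ a b : K, del (a * b) = a * del b + b * del a)
    (x : K) (hx : del x = 1)
    (k : ℕ) (μ : Fin k → K) (hμC : ∀ i, del (μ i) = 0)
    (hμdist : Function.Injective μ)
    (y : Fin k → K) (hy0 : ∀ i, y i ≠ 0) (hy : ∀ i, del (y i) = μ i * y i)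
    (n : Fin k → ℕ)
    (c : (i : Fin k) → Fin (n i) → K) (hcC : ∀ i j, del (c i j) = 0)
    (hsum : ∑ i : Fin k, ∑ j : Fin (n i), c i j * x ^ (j : ℕ) * y i = 0) :
    ∀ i j, c i j = 0 := by
  let D₀ := Derivation.ofAddMul del hadd hmul
  let p : Fin k → D₀.constants[X] := fun i => ∑ j : Fin (n i), monomial j ⟨c i j, hcC i j⟩
  have hp := D₀.overConstants.eq_zero_of_sum_aeval_mul_eq_zero (μ := fun i => ⟨μ i, hμC i⟩)
    (fun i j h => hμdist (congrArg Subtype.val h)) hy0 hy hx (s := Finset.univ) (p := p)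
    (by simpa [p, map_sum, Finset.sum_mul, aeval_monomial,
      Algebra.algebraMap_ofSubsemiring_apply] using hsum)
  intro i j
  simpa [p, finsetSum_coeff, coeff_monomial, Fin.val_inj] using
    congrArg (fun q => (q.coeff j : K)) (hp i (Finset.mem_univ i))

/-- In a differential field `(K, ∂)` with constants `C = ker ∂`,
if `∂ x = 1`, `μ₁, …, μ_k ∈ C` are pairwise distinct and `y_i ≠ 0` satisfy
`∂ y_i = μ_i y_i`, then the family `{x^j · y_i : i < k, j < n_i}` is linearly
independent over `C`, for any multiplicities `n_i ≥ 1`. -/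
theorem canonical_solutions_linearIndependent (K : Type*) [Field K] [CharZero K]
    (del : K → K)
    (hadd : ∀ a b : K, del (a + b) = del a + del b)
    (hmul : ∀ a b : K, del (a * b) = a * del b + b * del a)
    (x : K) (hx : del x = 1)
    (k : ℕ) (μ : Fin k → K) (hμC : ∀ i, del (μ i) = 0)
    (hμdist : Function.Injective μ)
    (y : Fin k → K) (hy0 : ∀ i, y i ≠ 0) (hy : ∀ i, del (y i) = μ i * y i)
    (n : Fin k → ℕ) (hn : ∀ i, 1 ≤ n i)
    (c : (i : Fin k) → Fin (n i) → K) (hcC : ∀ i j, del (c i j) = 0)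
    (hsum : ∑ i : Fin k, ∑ j : Fin (n i), c i j * x ^ (j : ℕ) * y i = 0) :
    ∀ i j, c i j = 0 :=
  canonical_solutions_linearIndependent_general K del hadd hmul x hx k μ hμC hμdist y hy0 hy n c hcC
    hsum
end

section
/- Let C be a field, μ₁, …, μ_k ∈ C^× distinct, with multiplicities n₁, …, n_k summing to n, and let x be transcendental over C. Define the n×n matrix H_x over C(x) whose rows correspond to applying ∂^l (l = 0, …, n-1) to the functions x^j e^{μ_i x} symbolically: the entry in row l and column (i,j) is g_{ijl}(x) where ∂^l(x^j y_i) = g_{ijl}(x) y_i for ∂ y_i = μ_i y_i, ∂x = 1. Then det H_x ≠ 0 in C(x). -/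
open Polynomial

/-- The polynomials `g_{ijl}(X)` determined by `g_{ij0}(X) = X^j` and
`g_{ij,l+1}(X) = g_{ijl}'(X) + μ_i · g_{ijl}(X)`, so that symbolically
`∂^l (x^j e^{μ_i x}) = g_{ijl}(x) e^{μ_i x}`. -/
noncomputable def gPoly {C : Type*} [Field C] (μ : C) (j : ℕ) : ℕ → Polynomial C
  | 0 => X ^ j
  | l + 1 => derivative (gPoly μ j l) + Polynomial.C μ * gPoly μ j l

section Aux

variable {C : Type*} [Field C]

lemma iter_deriv_sum {ι : Type*} (s : Finset ι) (f : ι → C[X]) (m : ℕ) :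
    derivative^[m] (∑ i ∈ s, f i) = ∑ i ∈ s, derivative^[m] (f i) := by
  simp only [← Module.End.pow_apply]
  exact map_sum _ _ _

noncomputable def Dmu (μ : C) : Module.End C C[X] :=
  (Polynomial.derivative : C[X] →ₗ[C] C[X]) + μ • 1

lemma gPoly_eq_pow (μ : C) (j l : ℕ) :
    gPoly μ j l = ((Dmu μ) ^ l) (X ^ j) := by
  induction l with
  | zero => simp [gPoly]
  | succ l ih =>
    rw [show gPoly μ j (l+1) = derivative (gPoly μ j l) + Polynomial.C μ * gPoly μ j l from rfl,
      ih, pow_succ', Module.End.mul_apply]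
    simp [Dmu, smul_eq_C_mul, add_comm]

lemma eval_zero_iter_deriv_X_pow (m j : ℕ) :
    eval (0:C) (derivative^[m] (X ^ j : C[X])) = if m = j then (j.factorial : C) else 0 := by
  rw [iterate_derivative_X_pow_eq_natCast_mul]
  rcases Nat.lt_trichotomy m j with h | rfl | h
  · simp [if_neg h.ne, zero_pow (Nat.sub_ne_zero_of_lt h)]
  · simp [Nat.descFactorial_self]
  · simp [if_neg h.ne', Nat.descFactorial_eq_zero_iff_lt.mpr h]

lemma eval_zero_gPoly (μ : C) (j l : ℕ) :
    (gPoly μ j l).eval 0 = (l.descFactorial j : C) * μ ^ (l - j) := by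
  have hc : Commute (Polynomial.derivative : Module.End C C[X]) (μ • 1) := by
    exact (Commute.one_right _).smul_right μ
  rw [gPoly_eq_pow, Dmu, hc.add_pow]
  simp only [_root_.smul_pow, one_pow]
  simp only [LinearMap.sum_apply, Module.End.mul_apply, Module.End.natCast_apply,
    LinearMap.smul_apply, Module.End.one_apply, Module.End.pow_apply,
    iterate_derivative_smul, iterate_derivative_natCast_mul, eval_natCast, Nat.sub_self, pow_zero, mul_one,
    eval_finset_sum, eval_smul, eval_mul, eval_C, eval_pow, eval_X, smul_eq_mul, nsmul_eq_mul,
    eval_zero_iter_deriv_X_pow]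
  rw [Finset.sum_eq_single j]
  · by_cases h : j ≤ l
    · simp [Nat.descFactorial_eq_factorial_mul_choose l j]
      ring
    · push_neg at h
      simp [Nat.choose_eq_zero_of_lt h, Nat.descFactorial_eq_zero_iff_lt.mpr h]
  · intro m _ hm
    simp [if_neg hm]
  · intro hj
    rw [Finset.mem_range, not_lt] at hj
    simp [Nat.choose_eq_zero_of_lt (by omega : l < j),
      Nat.descFactorial_eq_zero_iff_lt.mpr (by omega : l < j)]

lemma deriv_step (a : C) (m : ℕ) (Q : C[X]) :
    derivative ((X - Polynomial.C a) ^ (m+1) * Q)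
      = (X - Polynomial.C a) ^ m * (((m:C[X])+1) * Q + (X - Polynomial.C a) * derivative Q) := by
  simp only [derivative_mul, derivative_pow, derivative_sub, derivative_X, derivative_C,
    map_add, map_one, map_natCast, Nat.cast_add, Nat.cast_one, sub_zero, mul_one,
    Nat.add_sub_cancel_left, Nat.add_sub_cancel]
  ring

lemma key1 (a : C) : ∀ (m : ℕ) (Q : C[X]),
    (derivative^[m] ((X - Polynomial.C a) ^ m * Q)).eval a = m.factorial * Q.eval a := by
  intro m
  induction m with
  | zero => intro Q; simp
  | succ m ih =>
    intro Q
    rw [Function.iterate_succ_apply, deriv_step, ih]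
    simp [Nat.factorial_succ]
    ring

lemma key0 (a : C) (q : ℕ) : ∀ (m : ℕ) (Q : C[X]), q < m →
    (derivative^[q] ((X - Polynomial.C a) ^ m * Q)).eval a = 0 := by
  induction q with
  | zero =>
    intro m Q h
    simp [zero_pow (by omega : m ≠ 0)]
  | succ q ih =>
    intro m Q h
    obtain ⟨m', rfl⟩ : ∃ m', m = m' + 1 := ⟨m - 1, by omega⟩
    rw [Function.iterate_succ_apply, deriv_step]
    exact ih m' _ (by omega)

end Aux

/-- For distinct nonzero `μ₁, …, μ_k ∈ C^×` with multiplicities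
`n₁, …, n_k`, the determinant of the `n×n` matrix `H_x` with entry `g_{ijl}(x)` in
row `l` and column `(i,j)` is nonzero in `C(x)`. -/
theorem det_Hx_ne_zero (C : Type*) [Field C] [CharZero C]
    (k : ℕ) (μ : Fin k → C) (hμ0 : ∀ i, μ i ≠ 0) (hμdist : Function.Injective μ)
    (n : Fin k → ℕ) (hn : ∀ i, 1 ≤ n i)
    (e : ((i : Fin k) × Fin (n i)) ≃ Fin (∑ i : Fin k, n i)) :
    Matrix.det (Matrix.of fun r c : (i : Fin k) × Fin (n i) =>
        algebraMap (Polynomial C) (RatFunc C) (gPoly (μ c.1) (c.2 : ℕ) ((e r : ℕ)))) ≠ 0 := by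
  set M₀ : Matrix ((i : Fin k) × Fin (n i)) ((i : Fin k) × Fin (n i)) C[X] :=
    Matrix.of (fun r c => gPoly (μ c.1) (c.2 : ℕ) ((e r : ℕ))) with hM₀
  have h1 : (Matrix.of fun r c : (i : Fin k) × Fin (n i) =>
        algebraMap (Polynomial C) (RatFunc C) (gPoly (μ c.1) (c.2 : ℕ) ((e r : ℕ))))
      = (algebraMap C[X] (RatFunc C)).mapMatrix M₀ := rfl
  rw [h1, ← RingHom.map_det]
  intro hdet
  have hdet0 : M₀.det = 0 := by
    apply RatFunc.algebraMap_injective C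
    rw [hdet, map_zero]
  have hdetB : (((Polynomial.evalRingHom (0:C))).mapMatrix M₀).det = 0 := by
    rw [← RingHom.map_det, hdet0, map_zero]
  obtain ⟨v, hv0, hv⟩ := (Matrix.exists_mulVec_eq_zero_iff).mpr hdetB
  -- rows of the evaluated matrix
  have hrow : ∀ l : Fin (∑ i : Fin k, n i), ∑ c : (i : Fin k) × Fin (n i),
      (((l:ℕ).descFactorial (c.2:ℕ) : C) * μ c.1 ^ ((l:ℕ) - (c.2:ℕ))) * v c = 0 := by
    intro l
    have h2 := congrFun hv (e.symm l)
    simp only [Matrix.mulVec, dotProduct, Matrix.map_apply, hM₀, Matrix.of_apply,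
      RingHom.mapMatrix_apply, coe_evalRingHom, eval_zero_gPoly, Equiv.apply_symm_apply, Pi.zero_apply] at h2
    exact h2
  -- the functional vanishes on all polynomials of degree < N
  have key : ∀ P : C[X], P.natDegree < ∑ i : Fin k, n i →
      ∑ c : (i : Fin k) × Fin (n i), v c * (derivative^[(c.2:ℕ)] P).eval (μ c.1) = 0 := by
    intro P hP
    have hexp : ∀ (jj : ℕ) (a : C), (derivative^[jj] P).eval a
        = ∑ l ∈ Finset.range (∑ i : Fin k, n i), P.coeff l * (((l.descFactorial jj : C)) * a ^ (l - jj)) := by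
      intro jj a
      conv_lhs => rw [P.as_sum_range' _ hP]
      rw [iter_deriv_sum]
      simp only [← C_mul_X_pow_eq_monomial, iterate_derivative_C_mul,
        iterate_derivative_X_pow_eq_C_mul, eval_finset_sum, eval_mul, eval_C, eval_pow, eval_X]
    calc ∑ c : (i : Fin k) × Fin (n i), v c * (derivative^[(c.2:ℕ)] P).eval (μ c.1)
        = ∑ c : (i : Fin k) × Fin (n i), ∑ l ∈ Finset.range (∑ i : Fin k, n i),
            v c * (P.coeff l * (((l.descFactorial (c.2:ℕ) : C)) * μ c.1 ^ (l - (c.2:ℕ)))) := by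
          simp only [hexp, Finset.mul_sum]
      _ = ∑ l ∈ Finset.range (∑ i : Fin k, n i), ∑ c : (i : Fin k) × Fin (n i),
            v c * (P.coeff l * (((l.descFactorial (c.2:ℕ) : C)) * μ c.1 ^ (l - (c.2:ℕ)))) :=
          Finset.sum_comm
      _ = 0 := by
          apply Finset.sum_eq_zero
          intro l hl
          have h3 := hrow ⟨l, Finset.mem_range.mp hl⟩
          calc ∑ c : (i : Fin k) × Fin (n i),
              v c * (P.coeff l * (((l.descFactorial (c.2:ℕ) : C)) * μ c.1 ^ (l - (c.2:ℕ))))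
              = P.coeff l * ∑ c : (i : Fin k) × Fin (n i),
                (((l.descFactorial (c.2:ℕ) : C)) * μ c.1 ^ (l - (c.2:ℕ))) * v c := by
                rw [Finset.mul_sum]
                exact Finset.sum_congr rfl fun c _ => by ring
            _ = 0 := by rw [h3, mul_zero]
  -- Hermite interpolation kills every coordinate of v
  have hall : ∀ (i₀ : Fin k) (j₀ : Fin (n i₀)), v ⟨i₀, j₀⟩ = 0 := by
    intro i₀
    suffices H : ∀ t : ℕ, ∀ j₀ : Fin (n i₀), n i₀ - (j₀:ℕ) ≤ t → v ⟨i₀, j₀⟩ = 0 by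
      intro j₀; exact H (n i₀) j₀ (Nat.sub_le _ _)
    intro t
    induction t with
    | zero => intro j₀ h; exact absurd h (by have := j₀.isLt; omega)
    | succ t ih =>
      intro j₀ hj₀
      set Q : C[X] := ∏ i ∈ Finset.univ.erase i₀, (X - Polynomial.C (μ i)) ^ (n i) with hQ
      set P : C[X] := (X - Polynomial.C (μ i₀)) ^ (j₀:ℕ) * Q with hP
      have hQne : Q ≠ 0 := by
        rw [hQ]
        exact Finset.prod_ne_zero_iff.mpr fun i _ => pow_ne_zero _ (X_sub_C_ne_zero (μ i))
      have hdegQ : Q.natDegree = ∑ i ∈ Finset.univ.erase i₀, n i := by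
        rw [hQ, natDegree_prod _ _ fun i _ => pow_ne_zero _ (X_sub_C_ne_zero (μ i))]
        simp [natDegree_pow]
      have hdegP : P.natDegree < ∑ i : Fin k, n i := by
        rw [hP, natDegree_mul (pow_ne_zero _ (X_sub_C_ne_zero (μ i₀))) hQne,
          natDegree_pow, natDegree_X_sub_C, hdegQ, mul_one]
        have hsum : ∑ i : Fin k, n i = n i₀ + ∑ i ∈ Finset.univ.erase i₀, n i :=
          (Finset.add_sum_erase _ _ (Finset.mem_univ i₀)).symm
        have := j₀.isLt
        omega
      have hkey := key P hdegP
      rw [Fintype.sum_eq_single (⟨i₀, j₀⟩ : (i : Fin k) × Fin (n i)) ?other] at hkey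
      · -- main term
        rw [hP, key1] at hkey
        have hQval : Q.eval (μ i₀) ≠ 0 := by
          rw [hQ, eval_prod]
          apply Finset.prod_ne_zero_iff.mpr
          intro i hi
          simp only [eval_pow, eval_sub, eval_X, eval_C]
          apply pow_ne_zero
          rw [sub_ne_zero]
          exact fun h => (Finset.mem_erase.mp hi).1 (hμdist h.symm)
        have hfact : (((j₀:ℕ)).factorial : C) ≠ 0 :=
          Nat.cast_ne_zero.mpr (Nat.factorial_ne_zero _)
        rcases mul_eq_zero.mp hkey with h | h
        · exact h
        · exact absurd h (mul_ne_zero hfact hQval)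
      · -- other terms vanish
        rintro ⟨i, j⟩ hc
        by_cases hi : i = i₀
        · subst hi
          have hj : j ≠ j₀ := by
            intro h; exact hc (by rw [h])
          have hj' : (j:ℕ) ≠ (j₀:ℕ) := fun h => hj (Fin.ext h)
          rcases lt_or_gt_of_ne hj' with hlt | hgt
          · rw [hP, key0 _ _ _ _ hlt, mul_zero]
          · rw [ih j (by have := j₀.isLt; omega), zero_mul]
        · have hmem : i ∈ Finset.univ.erase i₀ := Finset.mem_erase.mpr ⟨hi, Finset.mem_univ i⟩
          obtain ⟨R, hR⟩ : ∃ R, P = (X - Polynomial.C (μ i)) ^ (n i) * R := by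
            refine ⟨(X - Polynomial.C (μ i₀)) ^ (j₀:ℕ) *
              ∏ i' ∈ (Finset.univ.erase i₀).erase i, (X - Polynomial.C (μ i')) ^ (n i'), ?_⟩
            rw [hP, hQ, ← Finset.mul_prod_erase _ _ hmem]
            ring
          rw [hR, key0 _ _ _ _ j.isLt, mul_zero]
  apply hv0
  funext c
  exact hall c.1 c.2
end
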